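/- Let β > 0, V₀ ≥ 0, N ≥ 2. Define on the region |x| < t (with r = |x|, z = 2r/(r+t) ∈ (0,1)) the function u(x,t) = (r+t)^{−β} φ(z) where φ ∈ C²((0,1)). Then u solves the radial equation ∂ₜ²u − ∂ᵣ²u − ((N−1)/r)∂ᵣu − (V₀/r)∂ₜu = 0 on {0 < r < t} if and only if φ solves the hypergeometric equation z(1−z)φ''(z) + (c − (1+a+b)z)φ'(z) − abφ(z) = 0 on (0,1) with a = β, b = (N−1+V₀)/2, c = N−1. -/

import Mathlib

open Real Set

/-- `u(r,t) = (r+t)^{−β} φ(2r/(r+t))` on the cone `0 < r < t`. -/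
noncomputable def uSelf (β : ℝ) (φ : ℝ → ℝ) (r t : ℝ) : ℝ :=
  (r + t) ^ (-β) * φ (2 * r / (r + t))

section aux

/-- derivative in `t` of `τ ↦ (r+τ)^p ψ(2r/(r+τ))` -/
lemma gderivT (p : ℝ) (ψ ψ' : ℝ → ℝ) (r t : ℝ) (hr : 0 < r) (hrt : r < t)
    (hψ : HasDerivAt ψ (ψ' (2*r/(r+t))) (2*r/(r+t))) :
    HasDerivAt (fun τ : ℝ => (r+τ) ^ p * ψ (2*r/(r+τ)))
      (p * (r+t) ^ (p-1) * ψ (2*r/(r+t))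
        + (r+t) ^ p * (ψ' (2*r/(r+t)) * (-(2*r)/(r+t)^2))) t := by
  have hs : (0:ℝ) < r + t := by linarith
  have h0 : HasDerivAt (fun τ : ℝ => r + τ) 1 t := (hasDerivAt_id t).const_add r
  have h1 : HasDerivAt (fun τ : ℝ => (r+τ) ^ p) (p * (r+t) ^ (p-1)) t := by
    have this : HasDerivAt (fun τ : ℝ => (r+τ) ^ p) (p * (r+t) ^ (p-1) * 1) t := (Real.hasDerivAt_rpow_const (x := r+t) (p := p) (Or.inl hs.ne')).comp t h0
    simpa using this
  have h2 : HasDerivAt (fun τ : ℝ => 2*r/(r+τ)) (-(2*r)/(r+t)^2) t := by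
    have this : HasDerivAt (fun τ : ℝ => 2*r/(r+τ)) ((0 * (r+t) - 2*r*1)/(r+t)^2) t := (hasDerivAt_const t (2*r)).div h0 hs.ne'
    convert this using 1
    field_simp
    ring
  have h3 := hψ.comp t h2
  exact h1.mul h3

/-- derivative in `r` of `ρ ↦ (ρ+t)^p ψ(2ρ/(ρ+t))` -/
lemma gderivR (p : ℝ) (ψ ψ' : ℝ → ℝ) (r t : ℝ) (hr : 0 < r) (hrt : r < t)
    (hψ : HasDerivAt ψ (ψ' (2*r/(r+t))) (2*r/(r+t))) :
    HasDerivAt (fun ρ : ℝ => (ρ+t) ^ p * ψ (2*ρ/(ρ+t)))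
      (p * (r+t) ^ (p-1) * ψ (2*r/(r+t))
        + (r+t) ^ p * (ψ' (2*r/(r+t)) * (2*t/(r+t)^2))) r := by
  have hs : (0:ℝ) < r + t := by linarith
  have h0 : HasDerivAt (fun ρ : ℝ => ρ + t) 1 r := (hasDerivAt_id r).add_const t
  have h1 : HasDerivAt (fun ρ : ℝ => (ρ+t) ^ p) (p * (r+t) ^ (p-1)) r := by
    have this : HasDerivAt ((fun x : ℝ => x ^ p) ∘ fun ρ : ℝ => ρ + t) (p * (r+t) ^ (p-1) * 1) r := (Real.hasDerivAt_rpow_const (x := r+t) (p := p) (Or.inl hs.ne')).comp r h0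
    simpa [Function.comp_def] using this
  have h2 : HasDerivAt (fun ρ : ℝ => 2*ρ/(ρ+t)) (2*t/(r+t)^2) r := by
    have hn : HasDerivAt (fun ρ : ℝ => 2*ρ) 2 r := by
      simpa using (hasDerivAt_id r).const_mul 2
    have this : HasDerivAt (fun ρ : ℝ => 2*ρ/(ρ+t)) ((2 * (r+t) - 2*r*1)/(r+t)^2) r := hn.div h0 hs.ne'
    convert this using 1
    field_simp
    ring
  have h3 := hψ.comp r h2
  exact h1.mul h3

end aux

/-- `u(r,t) = (r+t)^{−β} φ(2r/(r+t))` solves the radial wave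
equation with anti-damping, `∂ₜ²u − ∂ᵣ²u − ((N−1)/r)∂ᵣu − (V₀/r)∂ₜu = 0` on
`{0 < r < t}`, if and only if `φ` solves the Gauss hypergeometric equation with
`a = β`, `b = (N−1+V₀)/2`, `c = N−1` on `(0,1)`. -/
theorem stmt11 (N V₀ β : ℝ) (hN : 2 ≤ N) (hV : 0 ≤ V₀) (hβ : 0 < β)
    (φ φ' φ'' : ℝ → ℝ)
    (hd1 : ∀ z ∈ Ioo (0:ℝ) 1, HasDerivAt φ (φ' z) z)
    (hd2 : ∀ z ∈ Ioo (0:ℝ) 1, HasDerivAt φ' (φ'' z) z) :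
    (∀ r t : ℝ, 0 < r → r < t →
        deriv (deriv (fun τ => uSelf β φ r τ)) t
          - deriv (deriv (fun ρ => uSelf β φ ρ t)) r
          - (N - 1) / r * deriv (fun ρ => uSelf β φ ρ t) r
          - V₀ / r * deriv (fun τ => uSelf β φ r τ) t = 0)
      ↔
    (∀ z ∈ Ioo (0:ℝ) 1,
        z * (1 - z) * φ'' z
          + ((N - 1) - (1 + β + (N - 1 + V₀) / 2) * z) * φ' z
          - β * ((N - 1 + V₀) / 2) * φ z = 0) := by
  classical
  -- auxiliary functions
  set G : ℝ → ℝ := fun z => -β * φ z - z * φ' z with hG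
  set G' : ℝ → ℝ := fun z => -(β+1) * φ' z - z * φ'' z with hG'
  set H : ℝ → ℝ := fun z => -β * φ z + (2 - z) * φ' z with hH
  set H' : ℝ → ℝ := fun z => -(β+1) * φ' z + (2 - z) * φ'' z with hH'
  have hGd : ∀ z ∈ Ioo (0:ℝ) 1, HasDerivAt G (G' z) z := by
    intro z hz
    have this : HasDerivAt (fun y => -β * φ y - y * φ' y) (-β * φ' z - (1 * φ' z + z * φ'' z)) z := ((hd1 z hz).const_mul (-β)).sub ((hasDerivAt_id z).mul (hd2 z hz))
    convert this using 1
    simp [hG']; ring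
  have hHd : ∀ z ∈ Ioo (0:ℝ) 1, HasDerivAt H (H' z) z := by
    intro z hz
    have h2 : HasDerivAt (fun y : ℝ => (2 - y) * φ' y)
        ((-1) * φ' z + (2 - z) * φ'' z) z := by
      have hlin : HasDerivAt (fun y : ℝ => 2 - y) (-1) z := by
        simpa using (hasDerivAt_id z).const_sub 2
      exact hlin.mul (hd2 z hz)
    have this : HasDerivAt (fun y => -β * φ y + (2 - y) * φ' y) (-β * φ' z + ((-1) * φ' z + (2 - z) * φ'' z)) z := ((hd1 z hz).const_mul (-β)).add h2
    convert this using 1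
    simp [hH']; ring
  -- membership of z
  have hzmem : ∀ r t : ℝ, 0 < r → r < t → 2*r/(r+t) ∈ Ioo (0:ℝ) 1 := by
    intro r t hr hrt
    have hs : (0:ℝ) < r + t := by linarith
    constructor
    · positivity
    · rw [div_lt_one hs]; linarith
  -- clean first derivatives
  have keyT : ∀ r t : ℝ, 0 < r → r < t →
      HasDerivAt (fun τ => uSelf β φ r τ) ((r+t)^(-β-1) * G (2*r/(r+t))) t := by
    intro r t hr hrt
    have hs : (0:ℝ) < r + t := by linarith
    have h := gderivT (-β) φ φ' r t hr hrt (hd1 _ (hzmem r t hr hrt))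
    have hfun : (fun τ => uSelf β φ r τ) = fun τ : ℝ => (r+τ)^(-β) * φ (2*r/(r+τ)) := rfl
    rw [hfun]
    convert h using 1
    have hA : (r+t)^(-β) = (r+t)^(-β-1) * (r+t) := by
      rw [← Real.rpow_add_one hs.ne' (-β-1)]; congr 1; ring
    rw [hA]
    simp only [hG]
    field_simp
    ring
  have keyR : ∀ r t : ℝ, 0 < r → r < t →
      HasDerivAt (fun ρ => uSelf β φ ρ t) ((r+t)^(-β-1) * H (2*r/(r+t))) r := by
    intro r t hr hrt
    have hs : (0:ℝ) < r + t := by linarith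
    have h := gderivR (-β) φ φ' r t hr hrt (hd1 _ (hzmem r t hr hrt))
    have hfun : (fun ρ => uSelf β φ ρ t) = fun ρ : ℝ => (ρ+t)^(-β) * φ (2*ρ/(ρ+t)) := rfl
    rw [hfun]
    convert h using 1
    have hA : (r+t)^(-β) = (r+t)^(-β-1) * (r+t) := by
      rw [← Real.rpow_add_one hs.ne' (-β-1)]; congr 1; ring
    rw [hA]
    simp only [hH]
    field_simp
    ring
  -- second derivatives
  have keyTT : ∀ r t : ℝ, 0 < r → r < t →
      HasDerivAt (fun τ : ℝ => (r+τ)^(-β-1) * G (2*r/(r+τ)))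
        ((-β-1) * (r+t)^(-β-1-1) * G (2*r/(r+t))
          + (r+t)^(-β-1) * (G' (2*r/(r+t)) * (-(2*r)/(r+t)^2))) t :=
    fun r t hr hrt => gderivT (-β-1) G G' r t hr hrt (hGd _ (hzmem r t hr hrt))
  have keyRR : ∀ r t : ℝ, 0 < r → r < t →
      HasDerivAt (fun ρ : ℝ => (ρ+t)^(-β-1) * H (2*ρ/(ρ+t)))
        ((-β-1) * (r+t)^(-β-1-1) * H (2*r/(r+t))
          + (r+t)^(-β-1) * (H' (2*r/(r+t)) * (2*t/(r+t)^2))) r :=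
    fun r t hr hrt => gderivR (-β-1) H H' r t hr hrt (hHd _ (hzmem r t hr hrt))
  -- the key pointwise identity
  have key : ∀ r t : ℝ, 0 < r → r < t →
      deriv (deriv (fun τ => uSelf β φ r τ)) t
        - deriv (deriv (fun ρ => uSelf β φ ρ t)) r
        - (N - 1) / r * deriv (fun ρ => uSelf β φ ρ t) r
        - V₀ / r * deriv (fun τ => uSelf β φ r τ) t
      = -2 * (r+t)^(-β-1) / r *
          (2*r/(r+t) * (1 - 2*r/(r+t)) * φ'' (2*r/(r+t))
            + ((N - 1) - (1 + β + (N - 1 + V₀) / 2) * (2*r/(r+t))) * φ' (2*r/(r+t))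
            - β * ((N - 1 + V₀) / 2) * φ (2*r/(r+t))) := by
    intro r t hr hrt
    have hs : (0:ℝ) < r + t := by linarith
    have e1 : deriv (deriv (fun τ => uSelf β φ r τ)) t
        = (-β-1) * (r+t)^(-β-1-1) * G (2*r/(r+t))
          + (r+t)^(-β-1) * (G' (2*r/(r+t)) * (-(2*r)/(r+t)^2)) := by
      have hev : deriv (fun τ => uSelf β φ r τ)
          =ᶠ[nhds t] fun τ : ℝ => (r+τ)^(-β-1) * G (2*r/(r+τ)) := by
        filter_upwards [Ioi_mem_nhds hrt] with τ hτ
        exact (keyT r τ hr hτ).deriv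
      rw [hev.deriv_eq]
      exact (keyTT r t hr hrt).deriv
    have e3 : deriv (deriv (fun ρ => uSelf β φ ρ t)) r
        = (-β-1) * (r+t)^(-β-1-1) * H (2*r/(r+t))
          + (r+t)^(-β-1) * (H' (2*r/(r+t)) * (2*t/(r+t)^2)) := by
      have hev : deriv (fun ρ => uSelf β φ ρ t)
          =ᶠ[nhds r] fun ρ : ℝ => (ρ+t)^(-β-1) * H (2*ρ/(ρ+t)) := by
        filter_upwards [Ioo_mem_nhds hr hrt] with ρ hρ
        exact (keyR ρ t hρ.1 hρ.2).deriv
      rw [hev.deriv_eq]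
      exact (keyRR r t hr hrt).deriv
    rw [e1, e3, (keyT r t hr hrt).deriv, (keyR r t hr hrt).deriv]
    have hE : (r+t)^(-β-1) = (r+t)^(-β-1-1) * (r+t) := by
      rw [← Real.rpow_add_one hs.ne' (-β-1-1)]; congr 1; ring
    simp only [hG, hG', hH, hH']
    rw [hE]
    field_simp
    ring
  constructor
  · intro hpde z hz
    obtain ⟨hz0, hz1⟩ := hz
    have hrt : z < 2 - z := by linarith
    have h := hpde z (2 - z) hz0 hrt
    rw [key z (2 - z) hz0 hrt] at h
    have hsum : z + (2 - z) = 2 := by ring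
    rw [hsum, show 2*z/2 = z by ring] at h
    rcases mul_eq_zero.mp h with h' | h'
    · exfalso
      have hp : (0:ℝ) < (2:ℝ)^(-β-1) := Real.rpow_pos_of_pos two_pos _
      have : -2 * (2:ℝ)^(-β-1) / z < 0 := by
        apply div_neg_of_neg_of_pos _ hz0
        nlinarith
      linarith [h', this]
    · exact h'
  · intro hhyp r t hr hrt
    rw [key r t hr hrt, hhyp _ (hzmem r t hr hrt), mul_zero]
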